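/- arXiv:1806.05702 — 3 statements merged into one kernel-verified Lean document; each statement's English description precedes it below -/
import Mathlib

section
/- Let H ∈ (0,1), x ∈ 𝔛^H, and 0 < p < 1/H. Then for all t ∈ (0,1], lim_{n→∞} Σ_{s ∈ 𝕋_n, s ≤ t} |x(s′) − x(s)|^p = +∞. -/
open Filter Finset Set MeasureTheory ProbabilityTheory

noncomputable def e00 (t : ℝ) : ℝ := max (min t (1 - t)) 0

noncomputable def fs (m : ℕ) (k : ℤ) (t : ℝ) : ℝ :=
  (2 : ℝ) ^ (-(m : ℝ) / 2) * e00 ((2 : ℝ) ^ m * t - (k : ℝ))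

def IsSign (θ : ℕ → ℕ → ℝ) : Prop := ∀ m k, θ m k = 1 ∨ θ m k = -1

noncomputable def tlTerm (H : ℝ) (θ : ℕ → ℕ → ℝ) (m : ℕ) (t : ℝ) : ℝ :=
  (2 : ℝ) ^ ((m : ℝ) * (1 / 2 - H)) *
    ∑ k ∈ Finset.range (2 ^ m), θ m k * fs m (k : ℤ) t

noncomputable def sPartial (H : ℝ) (θ : ℕ → ℕ → ℝ) (n : ℕ) (t : ℝ) : ℝ :=
  ∑ m ∈ Finset.range n, tlTerm H θ m t

def MemX (H : ℝ) (x : ℝ → ℝ) : Prop :=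
  ∃ θ : ℕ → ℕ → ℝ, IsSign θ ∧ ∀ t : ℝ, x t = ∑' m : ℕ, tlTerm H θ m t

noncomputable def xTL (H : ℝ) (t : ℝ) : ℝ := ∑' m : ℕ, tlTerm H (fun _ _ => 1) m t

noncomputable def dyadicSum (p : ℝ) (x : ℝ → ℝ) (n : ℕ) (t : ℝ) : ℝ :=
  ∑ k ∈ Finset.range (2 ^ n),
    if (k : ℝ) / 2 ^ n ≤ t then |x (((k : ℝ) + 1) / 2 ^ n) - x ((k : ℝ) / 2 ^ n)| ^ p else 0

noncomputable def nuFloor (h : ℝ) : ℤ := ⌊-(Real.logb 2 h)⌋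

noncomputable def omegaH (H h : ℝ) : ℝ :=
  h * (2 : ℝ) ^ (((nuFloor h : ℝ) - 1) * (1 - H)) / ((2 : ℝ) ^ (1 - H) - 1) +
    (2 : ℝ) ^ ((1 - (nuFloor h : ℝ)) * H) / (3 * (1 - (2 : ℝ) ^ (-H)))


/-!
At a dyadic point of level `n + 1` only the Faber–Schauder levels `m ≤ n` of `x` are nonzero, and
each level `m < n` is affine on every interval `[k / 2 ^ n, (k + 1) / 2 ^ n]`. Hence the second
difference of `x` at the midpoint of such an interval is the contribution `±2 ^ (-n H)` of level
`n` alone, so one of the two half-increments has size at least `2 ^ (-n H) / 2`. The level-`(n + 1)`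
sum up to `t` is therefore at least `⌊t 2 ^ n⌋ · 2 ^ (-p) · 2 ^ (-n H p) ≍ 2 ^ (n (1 - H p))`,
which diverges since `H p < 1`.
-/

lemma e00_of_nonpos {s : ℝ} (hs : s ≤ 0) : e00 s = 0 :=
  max_eq_right ((min_le_left _ _).trans hs)

lemma e00_of_one_le {s : ℝ} (hs : 1 ≤ s) : e00 s = 0 :=
  max_eq_right ((min_le_right _ _).trans (by linarith))

lemma e00_intCast (z : ℤ) : e00 z = 0 := by
  rcases le_or_gt z 0 with hz | hz
  · exact e00_of_nonpos (by exact_mod_cast hz)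
  · exact e00_of_one_le (by exact_mod_cast hz)

lemma e00_eq_of_mem_Icc_half (j : ℤ) :
    ∃ α β : ℝ, ∀ s, (j : ℝ) / 2 ≤ s → s ≤ ((j : ℝ) + 1) / 2 → e00 s = α * s + β := by
  rcases lt_trichotomy j 0 with hj | rfl | hj
  · have hj' : (j : ℝ) + 1 ≤ 0 := by exact_mod_cast hj
    exact ⟨0, 0, fun s _ hs => by rw [e00_of_nonpos (by linarith)]; ring⟩
  · refine ⟨1, 0, fun s hs0 hs1 => ?_⟩
    simp only [Int.cast_zero, zero_div, zero_add] at hs0 hs1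
    rw [e00, min_eq_left (by linarith), max_eq_left hs0]
    ring
  rcases (Int.add_one_le_of_lt hj).eq_or_lt with hj1 | hj1
  · subst hj1
    refine ⟨-1, 1, fun s hs0 hs1 => ?_⟩
    norm_num at hs0 hs1
    rw [e00, min_eq_right (by linarith), max_eq_left (by linarith)]
    ring
  · have hj' : (2 : ℝ) ≤ j := by exact_mod_cast hj1
    exact ⟨0, 0, fun s hs _ => by rw [e00_of_one_le (by linarith)]; ring⟩

lemma e00_add_e00 {a b : ℝ} (j : ℤ) (ha : (j : ℝ) / 2 ≤ a) (hab : a ≤ b)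
    (hb : b ≤ ((j : ℝ) + 1) / 2) :
    e00 a + e00 b = 2 * e00 ((a + b) / 2) := by
  obtain ⟨α, β, h⟩ := e00_eq_of_mem_Icc_half j
  rw [h a ha (hab.trans hb), h b (ha.trans hab) hb, h _ (by linarith) (by linarith)]
  ring

lemma fs_add_fs (m : ℕ) (j i : ℤ) {a b : ℝ} (ha : (i : ℝ) / 2 ^ (m + 1) ≤ a) (hab : a ≤ b)
    (hb : b ≤ ((i : ℝ) + 1) / 2 ^ (m + 1)) :
    fs m j a + fs m j b = 2 * fs m j ((a + b) / 2) := by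
  have h2m : (0 : ℝ) < 2 ^ m := by positivity
  rw [div_le_iff₀ (by positivity), pow_succ] at ha
  rw [le_div_iff₀ (by positivity), pow_succ] at hb
  have he := e00_add_e00 (a := 2 ^ m * a - j) (b := 2 ^ m * b - j) (i - 2 * j)
    (by push_cast; linarith) (by nlinarith) (by push_cast; linarith)
  unfold fs
  rw [← mul_add, he]
  ring_nf

lemma tlTerm_add_tlTerm (H : ℝ) (θ : ℕ → ℕ → ℝ) (m : ℕ) (i : ℤ) {a b : ℝ}
    (ha : (i : ℝ) / 2 ^ (m + 1) ≤ a) (hab : a ≤ b) (hb : b ≤ ((i : ℝ) + 1) / 2 ^ (m + 1)) :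
    tlTerm H θ m a + tlTerm H θ m b = 2 * tlTerm H θ m ((a + b) / 2) := by
  unfold tlTerm
  have hterm : ∀ j ∈ Finset.range (2 ^ m), θ m j * fs m j a + θ m j * fs m j b =
      2 * (θ m j * fs m j ((a + b) / 2)) := fun j _ => by
    rw [← mul_add, fs_add_fs m j i ha hab hb]
    ring
  rw [← mul_add, ← Finset.sum_add_distrib, Finset.sum_congr rfl hterm, ← Finset.mul_sum]
  ring

lemma exists_dyadic_Icc_superset (k : ℕ) {l n : ℕ} (hln : l ≤ n) :
    ∃ i : ℕ, (i : ℝ) / 2 ^ l ≤ k / 2 ^ n ∧ ((k : ℝ) + 1) / 2 ^ n ≤ ((i : ℝ) + 1) / 2 ^ l := by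
  obtain ⟨d, rfl⟩ := Nat.exists_eq_add_of_le hln
  have hle : ((k / 2 ^ d : ℕ) : ℝ) * 2 ^ d ≤ k := by exact_mod_cast Nat.div_mul_le_self k (2 ^ d)
  have hlt : (k : ℝ) + 1 ≤ ((k / 2 ^ d : ℕ) + 1) * 2 ^ d := by
    exact_mod_cast add_one_mul (k / 2 ^ d) (2 ^ d) ▸ Nat.lt_div_mul_add (Nat.two_pow_pos d)
  have h2l : (0 : ℝ) < 2 ^ l := by positivity
  refine ⟨k / 2 ^ d, ?_, ?_⟩ <;>
    rw [div_le_div_iff₀ (by positivity) (by positivity), pow_add] <;> nlinarith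

lemma tlTerm_dyadic_of_le (H : ℝ) (θ : ℕ → ℕ → ℝ) {m n : ℕ} (k : ℕ) (hnm : n ≤ m) :
    tlTerm H θ m (k / 2 ^ n) = 0 := by
  obtain ⟨d, rfl⟩ := Nat.exists_eq_add_of_le hnm
  refine mul_eq_zero_of_right _ (Finset.sum_eq_zero fun j _ => ?_)
  have harg : (2 : ℝ) ^ (n + d) * (k / 2 ^ n) - (j : ℤ) = ((k * 2 ^ d - j : ℤ) : ℝ) := by
    push_cast
    field_simp
    ring
  rw [fs, harg, e00_intCast, mul_zero, mul_zero]

lemma tsum_tlTerm_dyadic (H : ℝ) (θ : ℕ → ℕ → ℝ) {n N : ℕ} (k : ℕ) (hnN : n ≤ N) :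
    ∑' m, tlTerm H θ m (k / 2 ^ n) = sPartial H θ N (k / 2 ^ n) :=
  tsum_eq_sum fun _ hm => tlTerm_dyadic_of_le H θ k
    (hnN.trans (not_lt.mp (Finset.mem_range.not.mp hm)))

lemma tlTerm_odd_dyadic (H : ℝ) (θ : ℕ → ℕ → ℝ) {n k : ℕ} (hk : k < 2 ^ n) :
    tlTerm H θ n ((2 * k + 1) / 2 ^ (n + 1)) = θ n k * 2 ^ (-(n : ℝ) * H) / 2 := by
  have harg : ∀ j : ℕ,
      (2 : ℝ) ^ n * ((2 * k + 1) / 2 ^ (n + 1)) - (j : ℤ) = (k - j : ℤ) + 1 / 2 := by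
    intro j
    push_cast
    field_simp
    ring
  have he : ∀ j : ℕ, e00 ((k - j : ℤ) + 1 / 2) = if j = k then 1 / 2 else 0 := by
    intro j
    split_ifs with hj
    · subst hj
      norm_num [e00]
    rcases lt_or_gt_of_ne hj with h | h
    · have : (1 : ℝ) ≤ (k - j : ℤ) := by exact_mod_cast (by omega : (1 : ℤ) ≤ k - j)
      exact e00_of_one_le (by linarith)
    · have : ((k - j : ℤ) : ℝ) ≤ -1 := by exact_mod_cast (by omega : (k - j : ℤ) ≤ -1)
      exact e00_of_nonpos (by linarith)
  simp only [tlTerm, fs, harg, he, mul_ite, mul_zero, Finset.sum_ite_eq', Finset.mem_range, hk,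
    if_true]
  rw [show (2 : ℝ) ^ (-(n : ℝ) * H) = 2 ^ ((n : ℝ) * (1 / 2 - H)) * 2 ^ (-(n : ℝ) / 2) by
    rw [← Real.rpow_add two_pos]; ring_nf]
  ring

lemma sPartial_second_diff (H : ℝ) (θ : ℕ → ℕ → ℝ) {n k : ℕ} (hk : k < 2 ^ n) :
    2 * sPartial H θ (n + 1) ((2 * k + 1) / 2 ^ (n + 1)) - sPartial H θ (n + 1) (k / 2 ^ n)
      - sPartial H θ (n + 1) ((k + 1) / 2 ^ n) = θ n k * 2 ^ (-(n : ℝ) * H) := by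
  have hmid : ((k : ℝ) / 2 ^ n + (k + 1) / 2 ^ n) / 2 = (2 * k + 1) / 2 ^ (n + 1) := by
    field_simp
    ring
  have hlow : ∀ m ∈ Finset.range n, tlTerm H θ m (k / 2 ^ n) + tlTerm H θ m ((k + 1) / 2 ^ n) =
      2 * tlTerm H θ m ((2 * k + 1) / 2 ^ (n + 1)) := by
    intro m hm
    obtain ⟨i, hi, hi'⟩ := exists_dyadic_Icc_superset k (Finset.mem_range.mp hm)
    rw [← hmid]
    exact tlTerm_add_tlTerm H θ m i (by rwa [Int.cast_natCast]) (by gcongr; linarith)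
      (by rwa [Int.cast_natCast])
  have hleft : tlTerm H θ n (k / 2 ^ n) = 0 := tlTerm_dyadic_of_le H θ k le_rfl
  have hright : tlTerm H θ n ((k + 1) / 2 ^ n) = 0 := by
    exact_mod_cast tlTerm_dyadic_of_le H θ (k + 1) le_rfl
  have hsum := Finset.sum_congr rfl hlow
  rw [Finset.sum_add_distrib, ← Finset.mul_sum] at hsum
  simp only [sPartial, Finset.sum_range_succ, hleft, hright, tlTerm_odd_dyadic H θ hk]
  linarith

lemma le_abs_sub_add_abs_sub_of_memX {H : ℝ} {x : ℝ → ℝ} (hx : MemX H x) {n k : ℕ}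
    (hk : k < 2 ^ n) :
    (2 : ℝ) ^ (-(n : ℝ) * H) ≤ |x ((2 * k + 1) / 2 ^ (n + 1)) - x (k / 2 ^ n)|
      + |x ((k + 1) / 2 ^ n) - x ((2 * k + 1) / 2 ^ (n + 1))| := by
  obtain ⟨θ, hθ, hxθ⟩ := hx
  have hmid := tsum_tlTerm_dyadic H θ (n := n + 1) (N := n + 1) (2 * k + 1) le_rfl
  have hleft := tsum_tlTerm_dyadic H θ (n := n) (N := n + 1) k (by omega)
  have hright := tsum_tlTerm_dyadic H θ (n := n) (N := n + 1) (k + 1) (by omega)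
  push_cast at hmid hright
  have hθnk : |θ n k| = 1 := by rcases hθ n k with h | h <;> simp [h]
  calc (2 : ℝ) ^ (-(n : ℝ) * H) = |θ n k * 2 ^ (-(n : ℝ) * H)| := by
        rw [abs_mul, hθnk, one_mul, abs_of_pos (by positivity)]
    _ = |(x ((2 * k + 1) / 2 ^ (n + 1)) - x (k / 2 ^ n))
          - (x ((k + 1) / 2 ^ n) - x ((2 * k + 1) / 2 ^ (n + 1)))| := by
        rw [hxθ, hxθ, hxθ, hmid, hleft, hright, ← sPartial_second_diff H θ hk]
        congr 1
        ring
    _ ≤ _ := abs_sub _ _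

lemma rpow_half_add_le_rpow_add_rpow {a b p : ℝ} (ha : 0 ≤ a) (hb : 0 ≤ b) (hp : 0 ≤ p) :
    ((a + b) / 2) ^ p ≤ a ^ p + b ^ p := by
  wlog hab : a ≤ b generalizing a b
  · rw [add_comm a, add_comm (a ^ p)]
    exact this hb ha (le_of_not_ge hab)
  calc ((a + b) / 2) ^ p ≤ b ^ p := Real.rpow_le_rpow (by positivity) (by linarith) hp
    _ ≤ a ^ p + b ^ p := le_add_of_nonneg_left (Real.rpow_nonneg ha p)

lemma sum_range_two_mul {M : Type*} [AddCommMonoid M] (f : ℕ → M) (K : ℕ) :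
    ∑ j ∈ Finset.range (2 * K), f j = ∑ k ∈ Finset.range K, (f (2 * k) + f (2 * k + 1)) := by
  induction K with
  | zero => simp
  | succ K ih =>
    rw [Nat.mul_succ, Finset.sum_range_succ, Finset.sum_range_succ, ih, Finset.sum_range_succ,
      add_assoc]

lemma floor_mul_le_dyadicSum {H p t : ℝ} {x : ℝ → ℝ} (hx : MemX H x) (hp : 0 ≤ p)
    (ht0 : 0 ≤ t) (ht1 : t ≤ 1) (n : ℕ) :
    ⌊t * 2 ^ n⌋₊ * ((2 : ℝ) ^ (-(n : ℝ) * H) / 2) ^ p ≤ dyadicSum p x (n + 1) t := by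
  set K := ⌊t * 2 ^ n⌋₊
  have hK : (K : ℝ) ≤ t * 2 ^ n := Nat.floor_le (by positivity)
  have hK2 : K ≤ 2 ^ n :=
    Nat.floor_le_of_le (by push_cast; nlinarith [pow_pos (two_pos (α := ℝ)) n])
  set g : ℕ → ℝ := fun j => |x ((j + 1) / 2 ^ (n + 1)) - x (j / 2 ^ (n + 1))| ^ p
  have hpair : ∀ k ∈ Finset.range K,
      ((2 : ℝ) ^ (-(n : ℝ) * H) / 2) ^ p ≤ g (2 * k) + g (2 * k + 1) := by
    intro k hk
    have hkn : k < 2 ^ n := (Finset.mem_range.mp hk).trans_le hK2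
    have hl : ((2 * k : ℕ) : ℝ) / 2 ^ (n + 1) = k / 2 ^ n := by push_cast; field_simp; ring
    have hr : ((2 * k + 1 : ℕ) : ℝ) + 1 = 2 * (k + 1) := by push_cast; ring
    have hr' : (2 * ((k : ℝ) + 1)) / 2 ^ (n + 1) = (k + 1) / 2 ^ n := by field_simp; ring
    simp only [g, hl, hr, hr']
    push_cast
    calc ((2 : ℝ) ^ (-(n : ℝ) * H) / 2) ^ p
        ≤ ((|x ((2 * k + 1) / 2 ^ (n + 1)) - x (k / 2 ^ n)|
            + |x ((k + 1) / 2 ^ n) - x ((2 * k + 1) / 2 ^ (n + 1))|) / 2) ^ p := by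
          gcongr
          exact le_abs_sub_add_abs_sub_of_memX hx hkn
      _ ≤ _ := rpow_half_add_le_rpow_add_rpow (abs_nonneg _) (abs_nonneg _) hp
  calc (K : ℝ) * ((2 : ℝ) ^ (-(n : ℝ) * H) / 2) ^ p
      = ∑ _k ∈ Finset.range K, ((2 : ℝ) ^ (-(n : ℝ) * H) / 2) ^ p := by simp
    _ ≤ ∑ k ∈ Finset.range K, (g (2 * k) + g (2 * k + 1)) := Finset.sum_le_sum hpair
    _ = ∑ j ∈ Finset.range (2 * K), g j := (sum_range_two_mul g K).symm
    _ = ∑ j ∈ Finset.range (2 * K),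
          if (j : ℝ) / 2 ^ (n + 1) ≤ t then g j else 0 := by
        refine Finset.sum_congr rfl fun j hj => (if_pos ?_).symm
        have hj : (j : ℝ) ≤ 2 * K := by exact_mod_cast (Finset.mem_range.mp hj).le
        rw [div_le_iff₀ (by positivity), pow_succ]
        nlinarith
    _ ≤ dyadicSum p x (n + 1) t := by
        refine Finset.sum_le_sum_of_subset_of_nonneg
          (Finset.range_subset_range.mpr (by rw [pow_succ]; omega)) fun j _ _ => ?_
        split_ifs <;> positivity

lemma tendsto_floor_mul_rpow_atTop {H p t : ℝ} (ht : 0 < t) (hHp : H * p < 1) :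
    Tendsto (fun n : ℕ => (⌊t * 2 ^ n⌋₊ : ℝ) * ((2 : ℝ) ^ (-(n : ℝ) * H) / 2) ^ p)
      atTop atTop := by
  have hc : ∀ n : ℕ, ((2 : ℝ) ^ (-(n : ℝ) * H) / 2) ^ p = (2 ^ (-(H * p))) ^ n / 2 ^ p := by
    intro n
    rw [Real.div_rpow (by positivity) zero_le_two, ← Real.rpow_mul zero_le_two,
      ← Real.rpow_mul_natCast zero_le_two]
    congr 2
    ring
  have hr : 1 < 2 * (2 : ℝ) ^ (-(H * p)) := by
    rw [← Real.rpow_one_add' zero_le_two (by linarith)]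
    exact Real.one_lt_rpow one_lt_two (by linarith)
  have hy : Tendsto (fun n : ℕ => t * 2 ^ n) atTop atTop :=
    (tendsto_pow_atTop_atTop_of_one_lt one_lt_two).const_mul_atTop ht
  have hgrowth : Tendsto (fun n : ℕ => t / 2 ^ p * (2 * (2 : ℝ) ^ (-(H * p))) ^ n) atTop atTop :=
    (tendsto_pow_atTop_atTop_of_one_lt hr).const_mul_atTop (by positivity)
  refine ((tendsto_nat_floor_div_atTop.comp hy).pos_mul_atTop one_pos hgrowth).congr fun n => ?_
  simp only [Function.comp_apply, hc, mul_pow]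
  field_simp

theorem stmt16 (H p : ℝ) (hH : H ∈ Set.Ioo (0:ℝ) 1) (hp0 : 0 < p) (hp : p < 1/H)
    (x : ℝ → ℝ) (hx : MemX H x) (t : ℝ) (ht : t ∈ Set.Ioc (0:ℝ) 1) :
    Tendsto (fun n => dyadicSum p x n t) atTop atTop := by
  have hHp : H * p < 1 := by rwa [lt_div_iff₀ hH.1, mul_comm] at hp
  exact (tendsto_add_atTop_iff_nat 1).mp <| tendsto_atTop_mono
    (floor_mul_le_dyadicSum hx hp0.le ht.1.le ht.2) (tendsto_floor_mul_rpow_atTop ht.1 hHp)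
end

section
/- Suppose H ∈ (0,1) is such that p = 1/H is an odd integer, and let x ∈ 𝔛^H. Then for all t ∈ [0,1], lim_{n→∞} Σ_{s ∈ 𝕋_n, s ≤ t} (x(s′) − x(s))^p = 0 (signed p-th power sums, without absolute values). -/
open Filter Finset Set MeasureTheory ProbabilityTheory

/-!
The increment of `x ∈ 𝔛^H` over the `k`-th dyadic interval of level `n` only sees the first `n`
levels of the Schauder expansion and equals `∑_{m<n} ± 2^{-n} ρ^m` with `ρ = 2^{1-H}`; the sign
of level `m` is `θ` times the slope of the tent containing the interval. On a full dyadic block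
the multiset of these increments does not depend on the signs, so it is symmetric and its odd
moments vanish. Cutting `[0, t]` into full blocks along the binary expansion of `t`, each block
contributes only through its shift (mean value theorem), and summing the geometric bounds gives
`|∑ (Δx)^p| ≤ C ((ρ/2)^(p-1))^n`, which tends to `0` because `p = 1/H > 1`.
-/

namespace TakagiLandsberg

lemma e00_eq_zero_of_nonpos {u : ℝ} (h : u ≤ 0) : e00 u = 0 :=
  max_eq_right ((min_le_left _ _).trans h)

lemma e00_eq_zero_of_one_le {u : ℝ} (h : 1 ≤ u) : e00 u = 0 :=
  max_eq_right ((min_le_right _ _).trans (by linarith))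

lemma e00_of_le_half {u : ℝ} (h₀ : 0 ≤ u) (h : u ≤ 1 / 2) : e00 u = u := by
  rw [e00, min_eq_left (by linarith), max_eq_left h₀]

lemma e00_of_half_le {u : ℝ} (h : 1 / 2 ≤ u) (h₁ : u ≤ 1) : e00 u = 1 - u := by
  rw [e00, min_eq_right (by linarith), max_eq_left (by linarith)]

lemma e00_intCast (z : ℤ) : e00 z = 0 := by
  rcases le_or_gt z 0 with h | h
  · exact e00_eq_zero_of_nonpos (by exact_mod_cast h)
  · exact e00_eq_zero_of_one_le (by exact_mod_cast h)

lemma e00_sub_intCast_eq_zero {i j : ℤ} (hij : i ≠ j) {u : ℝ} (hu : u ∈ Icc (i : ℝ) (i + 1)) :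
    e00 (u - j) = 0 := by
  rcases hij.lt_or_gt with h | h
  · have : (i : ℝ) + 1 ≤ j := by exact_mod_cast h
    exact e00_eq_zero_of_nonpos (by linarith [hu.2])
  · have : (j : ℝ) + 1 ≤ i := by exact_mod_cast h
    exact e00_eq_zero_of_one_le (by linarith [hu.1])

lemma e00_succ_div_sub_e00_div {e r : ℕ} (hr : r < 2 ^ (e + 1)) :
    e00 ((r + 1) / 2 ^ (e + 1)) - e00 (r / 2 ^ (e + 1)) = (-1) ^ (r / 2 ^ e) / 2 ^ (e + 1) := by
  have hN : (0 : ℝ) < 2 ^ e := by positivity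
  rw [pow_succ] at hr ⊢
  rcases lt_or_ge r (2 ^ e) with hre | hre
  · have hr' : (r : ℝ) + 1 ≤ 2 ^ e := by exact_mod_cast hre
    rw [Nat.div_eq_of_lt hre, e00_of_le_half (by positivity), e00_of_le_half (by positivity)]
    · ring
    all_goals rw [div_le_iff₀ (by positivity)]; linarith
  · have hr₁ : (2 : ℝ) ^ e ≤ r := by exact_mod_cast hre
    have hr₂ : (r : ℝ) + 1 ≤ 2 ^ e * 2 := by exact_mod_cast hr
    rw [Nat.div_eq_of_lt_le (k := 1) (by simpa using hre) (by omega), e00_of_half_le, e00_of_half_le]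
    · ring
    all_goals first
      | rw [le_div_iff₀ (by positivity)]; linarith
      | rw [div_le_iff₀ (by positivity)]; linarith

lemma tlTerm_dyadic_eq_zero (H : ℝ) (θ : ℕ → ℕ → ℝ) {m n : ℕ} (h : n ≤ m) (k : ℕ) :
    tlTerm H θ m (k / 2 ^ n) = 0 := by
  refine mul_eq_zero_of_right _ (Finset.sum_eq_zero fun j _ => ?_)
  obtain ⟨l, rfl⟩ := Nat.exists_eq_add_of_le h
  have harg : (2 : ℝ) ^ (n + l) * (k / 2 ^ n) - (j : ℤ) = ((k * 2 ^ l - j : ℤ) : ℝ) := by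
    push_cast
    field_simp
    ring
  rw [fs, harg, e00_intCast, mul_zero, mul_zero]

lemma tlTerm_scale (H : ℝ) (m : ℕ) :
    (2 : ℝ) ^ ((m : ℝ) * (1 / 2 - H)) * 2 ^ (-(m : ℝ) / 2) = (2 ^ (1 - H)) ^ m / 2 ^ m := by
  rw [eq_div_iff (by positivity), ← Real.rpow_natCast, ← Real.rpow_natCast, ← Real.rpow_mul two_pos.le,
    ← Real.rpow_add two_pos, ← Real.rpow_add two_pos]
  ring_nf

-- Only the level-`m` tent containing `[k/2^n, (k+1)/2^n]` moves, and it moves by `±2^(m-n)`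
-- according to whether the interval lies in its rising or its falling half.
lemma tlTerm_dyadic_sub (H : ℝ) (θ : ℕ → ℕ → ℝ) {m n k : ℕ} (hm : m < n) (hk : k < 2 ^ n) :
    tlTerm H θ m ((k + 1) / 2 ^ n) - tlTerm H θ m (k / 2 ^ n)
      = (2 ^ n)⁻¹ * (2 ^ (1 - H)) ^ m * θ m (k / 2 ^ (n - m)) * (-1) ^ (k / 2 ^ (n - m - 1)) := by
  obtain ⟨e, rfl⟩ : ∃ e, n = m + (e + 1) := ⟨n - m - 1, by omega⟩
  simp only [Nat.add_sub_cancel_left, Nat.add_sub_cancel]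
  set j₀ := k / 2 ^ (e + 1)
  set r := k % 2 ^ (e + 1)
  have hkr : k = 2 ^ (e + 1) * j₀ + r := (Nat.div_add_mod k _).symm
  have hj₀ : j₀ < 2 ^ m := Nat.div_lt_of_lt_mul (by rwa [← pow_add, add_comm])
  have hscale : ∀ y : ℝ, (2 : ℝ) ^ m * (y / 2 ^ (m + (e + 1))) = y / 2 ^ (e + 1) := fun y => by
    rw [pow_add]; field_simp
  have hmem : ∀ y ∈ Icc (k : ℝ) (k + 1), y / 2 ^ (e + 1) ∈ Icc ((j₀ : ℤ) : ℝ) ((j₀ : ℤ) + 1) := by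
    rintro y ⟨hy₁, hy₂⟩
    have hr : r < 2 ^ (e + 1) := Nat.mod_lt _ (by positivity)
    have h₁ : (2 : ℝ) ^ (e + 1) * j₀ ≤ k := by exact_mod_cast (hkr ▸ Nat.le_add_right _ _)
    have h₂ : (k : ℝ) + 1 ≤ 2 ^ (e + 1) * (j₀ + 1) := by
      exact_mod_cast (by rw [mul_add, mul_one]; omega : k + 1 ≤ 2 ^ (e + 1) * (j₀ + 1))
    push_cast
    constructor
    · rw [le_div_iff₀ (by positivity)]; linarith
    · rw [div_le_iff₀ (by positivity)]; linarith
  have hsum : ∑ j ∈ range (2 ^ m), θ m j *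
      (e00 ((k + 1) / 2 ^ (e + 1) - (j : ℤ)) - e00 (k / 2 ^ (e + 1) - (j : ℤ)))
        = θ m j₀ * ((-1) ^ (k / 2 ^ e) / 2 ^ (e + 1)) := by
    rw [Finset.sum_eq_single_of_mem j₀ (Finset.mem_range.mpr hj₀)]
    · have hbit : k / 2 ^ e = 2 * j₀ + r / 2 ^ e := by
        rw [hkr, pow_succ, mul_assoc, Nat.mul_add_div (by positivity)]
      have hk : (k : ℝ) = 2 ^ (e + 1) * j₀ + r := by exact_mod_cast hkr
      have h₁ : ((k : ℝ) + 1) / 2 ^ (e + 1) - ((j₀ : ℤ) : ℝ) = (r + 1) / 2 ^ (e + 1) := by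
        rw [hk]; push_cast; field_simp; ring
      have h₀ : (k : ℝ) / 2 ^ (e + 1) - ((j₀ : ℤ) : ℝ) = r / 2 ^ (e + 1) := by
        rw [hk]; push_cast; field_simp; ring
      rw [h₁, h₀,
        e00_succ_div_sub_e00_div (Nat.mod_lt _ (by positivity)), hbit, pow_add (-1 : ℝ), pow_mul]
      simp only [neg_one_sq, one_pow, one_mul]
      rfl
    · intro j _ hj
      rw [e00_sub_intCast_eq_zero (by exact_mod_cast hj.symm) (hmem _ ⟨by linarith, le_rfl⟩),
        e00_sub_intCast_eq_zero (by exact_mod_cast hj.symm) (hmem _ ⟨le_rfl, by linarith⟩),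
        sub_self, mul_zero]
  have hsummand : ∀ j : ℕ, θ m j * fs m j ((k + 1) / 2 ^ (m + (e + 1)))
      - θ m j * fs m j (k / 2 ^ (m + (e + 1)))
      = 2 ^ (-(m : ℝ) / 2) * (θ m j *
          (e00 ((k + 1) / 2 ^ (e + 1) - (j : ℤ)) - e00 (k / 2 ^ (e + 1) - (j : ℤ)))) := fun j => by
    rw [fs, fs, hscale, hscale]
    ring
  rw [tlTerm, tlTerm, ← mul_sub, ← Finset.sum_sub_distrib, Finset.sum_congr rfl fun j _ => hsummand j,
    ← Finset.mul_sum, hsum, ← mul_assoc, tlTerm_scale]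
  field_simp
  ring

-- The increment of `∑_{m<d} w m ∑_j θ m j · tent_{m,j}` over `[k/2^d, (k+1)/2^d]`, up to the
-- normalisation of `w`: the interval lies in the level-`m` tent `j = k / 2^(d-m)`, in its rising
-- or falling half according to bit `d-m-1` of `k`.
noncomputable def dyadicIncr (w : ℕ → ℝ) (θ : ℕ → ℕ → ℝ) (d k : ℕ) : ℝ :=
  ∑ m ∈ range d, w m * θ m (k / 2 ^ (d - m)) * (-1) ^ (k / 2 ^ (d - m - 1))

section dyadicIncr

variable (w : ℕ → ℝ) (θ : ℕ → ℕ → ℝ)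

@[simp] lemma dyadicIncr_zero (k : ℕ) : dyadicIncr w θ 0 k = 0 := by
  simp [dyadicIncr]

lemma dyadicIncr_neg (d k : ℕ) :
    dyadicIncr w (fun m j => -θ m j) d k = -dyadicIncr w θ d k := by
  simp only [dyadicIncr, ← Finset.sum_neg_distrib]
  exact Finset.sum_congr rfl fun _ _ => by ring

lemma dyadicIncr_succ_of_lt {d k : ℕ} (hk : k < 2 ^ d) :
    dyadicIncr w θ (d + 1) k
      = w 0 * θ 0 0 + dyadicIncr (fun m => w (m + 1)) (fun m j => θ (m + 1) j) d k := by
  rw [dyadicIncr, Finset.sum_range_succ', add_comm]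
  have h₁ : k / 2 ^ (d + 1) = 0 := Nat.div_eq_of_lt (hk.trans (Nat.pow_lt_pow_succ one_lt_two))
  simp [dyadicIncr, h₁, Nat.div_eq_of_lt hk]

lemma dyadicIncr_succ_two_pow_add {d r : ℕ} (hr : r < 2 ^ d) :
    dyadicIncr w θ (d + 1) (2 ^ d + r)
      = -(w 0 * θ 0 0)
        + dyadicIncr (fun m => w (m + 1)) (fun m j => θ (m + 1) (2 ^ m + j)) d r := by
  rw [dyadicIncr, Finset.sum_range_succ', add_comm]
  have h₁ : (2 ^ d + r) / 2 ^ (d + 1) = 0 := Nat.div_eq_of_lt (by rw [pow_succ]; omega)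
  have h₂ : (2 ^ d + r) / 2 ^ d = 1 := by
    rw [add_comm, Nat.add_div_right _ (by positivity), Nat.div_eq_of_lt hr]
  simp only [Nat.sub_zero, Nat.add_sub_cancel, h₁, h₂, pow_one, mul_neg_one]
  congr 1
  refine Finset.sum_congr rfl fun m hm => ?_
  have hm : m < d := Finset.mem_range.mp hm
  have hsplit : ∀ i j, i + j = d → (2 ^ d + r) / 2 ^ i = 2 ^ j + r / 2 ^ i := fun i j h => by
    rw [← h, pow_add, Nat.mul_add_div (by positivity)]
  rw [Nat.add_sub_add_right, hsplit (d - m) m (by omega), hsplit (d - m - 1) (m + 1) (by omega),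
    pow_add (-1 : ℝ) (2 ^ (m + 1)), (Nat.even_pow.mpr ⟨even_two, by omega⟩).neg_one_pow, one_mul]

lemma sum_comp_dyadicIncr_succ (f : ℝ → ℝ) {d K : ℕ} (hK : K ≤ 2 ^ d) :
    ∑ k ∈ range K, f (dyadicIncr w θ (d + 1) k)
      = ∑ k ∈ range K,
          f (w 0 * θ 0 0 + dyadicIncr (fun m => w (m + 1)) (fun m j => θ (m + 1) j) d k) :=
  Finset.sum_congr rfl fun k hk => by
    rw [dyadicIncr_succ_of_lt w θ ((Finset.mem_range.mp hk).trans_le hK)]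

lemma sum_comp_dyadicIncr_succ_two_pow_add (f : ℝ → ℝ) {d K : ℕ} (hK : K ≤ 2 ^ d) :
    ∑ k ∈ range K, f (dyadicIncr w θ (d + 1) (2 ^ d + k))
      = ∑ k ∈ range K, f (-(w 0 * θ 0 0)
          + dyadicIncr (fun m => w (m + 1)) (fun m j => θ (m + 1) (2 ^ m + j)) d k) :=
  Finset.sum_congr rfl fun k hk => by
    rw [dyadicIncr_succ_two_pow_add w θ ((Finset.mem_range.mp hk).trans_le hK)]

end dyadicIncr

lemma IsSign.neg {θ : ℕ → ℕ → ℝ} (hθ : IsSign θ) : IsSign fun m j => -θ m j :=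
  fun m j => (hθ m j).symm.imp (by simp [·]) (by simp [·])

-- Over a full block of `2 ^ d` intervals the increments have the same distribution for every
-- sign pattern: flipping `θ 0 0` only swaps the two halves.
lemma sum_comp_dyadicIncr_eq (d : ℕ) :
    ∀ (w : ℕ → ℝ) {θ θ' : ℕ → ℕ → ℝ}, IsSign θ → IsSign θ' → ∀ f : ℝ → ℝ,
      ∑ k ∈ range (2 ^ d), f (dyadicIncr w θ d k) = ∑ k ∈ range (2 ^ d), f (dyadicIncr w θ' d k) := by
  induction d with
  | zero => simp
  | succ d ih =>
    intro w θ θ' hθ hθ' f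
    set w' : ℕ → ℝ := fun m => w (m + 1)
    have hone : IsSign fun _ _ => (1 : ℝ) := fun _ _ => Or.inl rfl
    have hsplit : ∀ {τ : ℕ → ℕ → ℝ}, IsSign τ →
        ∑ k ∈ range (2 ^ (d + 1)), f (dyadicIncr w τ (d + 1) k)
          = ∑ k ∈ range (2 ^ d), f (w 0 * τ 0 0 + dyadicIncr w' (fun _ _ => 1) d k)
            + ∑ k ∈ range (2 ^ d), f (-(w 0 * τ 0 0) + dyadicIncr w' (fun _ _ => 1) d k) := by
      intro τ hτ
      rw [pow_succ, mul_two, Finset.sum_range_add, sum_comp_dyadicIncr_succ w τ f le_rfl,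
        sum_comp_dyadicIncr_succ_two_pow_add w τ f le_rfl]
      congr 1
      · exact ih w' (fun m j => hτ (m + 1) j) hone (fun y => f (w 0 * τ 0 0 + y))
      · exact ih w' (fun m j => hτ (m + 1) (2 ^ m + j)) hone (fun y => f (-(w 0 * τ 0 0) + y))
    rw [hsplit hθ, hsplit hθ']
    rcases hθ 0 0 with h | h <;> rcases hθ' 0 0 with h' | h' <;> simp only [h, h', neg_neg, mul_neg] <;>
      ring

lemma sum_dyadicIncr_pow_eq_zero {p : ℕ} (hp : Odd p) (d : ℕ) (w : ℕ → ℝ) {θ : ℕ → ℕ → ℝ}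
    (hθ : IsSign θ) : ∑ k ∈ range (2 ^ d), dyadicIncr w θ d k ^ p = 0 := by
  have h := sum_comp_dyadicIncr_eq d w hθ (IsSign.neg hθ) (· ^ p)
  simp only [dyadicIncr_neg, hp.neg_pow, Finset.sum_neg_distrib] at h
  linarith

lemma abs_dyadicIncr_le {w : ℕ → ℝ} (hw : ∀ m, 0 ≤ w m) {θ : ℕ → ℕ → ℝ} (hθ : IsSign θ)
    (d k : ℕ) : |dyadicIncr w θ d k| ≤ ∑ m ∈ range d, w m := by
  refine (Finset.abs_sum_le_sum_abs _ _).trans (Finset.sum_le_sum fun m _ => ?_)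
  rcases hθ m (k / 2 ^ (d - m)) with h | h <;> simp [h, abs_of_nonneg (hw m)]

lemma abs_sum_add_dyadicIncr_pow_le {p : ℕ} (hp : Odd p) {w : ℕ → ℝ} (hw : ∀ m, 0 ≤ w m)
    {θ : ℕ → ℕ → ℝ} (hθ : IsSign θ) (d : ℕ) (γ : ℝ) :
    |∑ k ∈ range (2 ^ d), (γ + dyadicIncr w θ d k) ^ p|
      ≤ 2 ^ d * p * |γ| * (|γ| + ∑ m ∈ range d, w m) ^ (p - 1) := by
  set A := ∑ m ∈ range d, w m
  have hterm : ∀ k, |(γ + dyadicIncr w θ d k) ^ p - dyadicIncr w θ d k ^ p|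
      ≤ |γ| * p * (|γ| + A) ^ (p - 1) := fun k => by
    have hD := abs_dyadicIncr_le hw hθ d k
    refine (abs_pow_sub_pow_le _ _ _).trans ?_
    rw [add_sub_cancel_right]
    gcongr
    exact max_le ((abs_add_le _ _).trans (by linarith)) (by linarith [abs_nonneg γ])
  calc |∑ k ∈ range (2 ^ d), (γ + dyadicIncr w θ d k) ^ p|
      = |∑ k ∈ range (2 ^ d), ((γ + dyadicIncr w θ d k) ^ p - dyadicIncr w θ d k ^ p)| := by
        rw [Finset.sum_sub_distrib, sum_dyadicIncr_pow_eq_zero hp d w hθ, sub_zero]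
    _ ≤ ∑ k ∈ range (2 ^ d), |γ| * p * (|γ| + A) ^ (p - 1) :=
        (Finset.abs_sum_le_sum_abs _ _).trans (Finset.sum_le_sum fun k _ => hterm k)
    _ = 2 ^ d * p * |γ| * (|γ| + A) ^ (p - 1) := by simp; ring

lemma abs_sum_add_geom_dyadicIncr_pow_le_of_full {p : ℕ} (hp : Odd p) {ρ c γ : ℝ} (hρ : 1 < ρ)
    (hc : 0 < c) {w : ℕ → ℝ} (hw : ∀ m, w m = c * ρ ^ m) {θ : ℕ → ℕ → ℝ} (hθ : IsSign θ)
    (d : ℕ) (hγ : |γ| ≤ c * (ρ - 1)⁻¹) :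
    |∑ k ∈ range (2 ^ d), (γ + dyadicIncr w θ d k) ^ p|
      ≤ p * (ρ - 1)⁻¹ ^ p * c ^ p * (2 * ρ ^ (p - 1)) ^ d := by
  have hw₀ : ∀ m, 0 ≤ w m := fun m => by rw [hw]; positivity
  have hA : ∑ m ∈ range d, w m = c * (ρ - 1)⁻¹ * (ρ ^ d - 1) := by
    simp only [hw, ← Finset.mul_sum, geom_sum_eq hρ.ne', div_eq_mul_inv]
    ring
  have hgeom : |γ| + ∑ m ∈ range d, w m ≤ c * (ρ - 1)⁻¹ * ρ ^ d := by
    rw [hA]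
    linear_combination hγ
  have hA₀ : 0 ≤ |γ| + ∑ m ∈ range d, w m :=
    add_nonneg (abs_nonneg γ) (Finset.sum_nonneg fun m _ => hw₀ m)
  refine (abs_sum_add_dyadicIncr_pow_le hp hw₀ hθ d γ).trans ?_
  obtain ⟨q, rfl⟩ := Nat.exists_eq_add_one.mpr hp.pos
  rw [Nat.add_sub_cancel]
  calc 2 ^ d * ((q + 1 : ℕ) : ℝ) * |γ| * (|γ| + ∑ m ∈ range d, w m) ^ q
      ≤ 2 ^ d * ((q + 1 : ℕ) : ℝ) * (c * (ρ - 1)⁻¹) * (c * (ρ - 1)⁻¹ * ρ ^ d) ^ q := by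
        gcongr
    _ = _ := by ring

lemma mul_mul_pow_le_of_mul_le {p : ℕ} (hp : 0 < p) {ρ c C E : ℝ} (hρ : 0 ≤ ρ) (hc : 0 ≤ c)
    (h : C * ρ ≤ 2 * E) (d : ℕ) :
    C * (c * ρ) ^ p * (2 * ρ ^ (p - 1)) ^ d ≤ E * c ^ p * (2 * ρ ^ (p - 1)) ^ (d + 1) := by
  have hρp : ρ ^ p = ρ * ρ ^ (p - 1) := by rw [← pow_succ', Nat.sub_add_cancel hp]
  have hY : 0 ≤ c ^ p * ρ ^ (p - 1) * (2 * ρ ^ (p - 1)) ^ d := by positivity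
  calc C * (c * ρ) ^ p * (2 * ρ ^ (p - 1)) ^ d
      = C * ρ * (c ^ p * ρ ^ (p - 1) * (2 * ρ ^ (p - 1)) ^ d) := by rw [mul_pow, hρp]; ring
    _ ≤ 2 * E * (c ^ p * ρ ^ (p - 1) * (2 * ρ ^ (p - 1)) ^ d) := mul_le_mul_of_nonneg_right h hY
    _ = E * c ^ p * (2 * ρ ^ (p - 1)) ^ (d + 1) := by ring

-- The partial block `range K` splits into a full left half, bounded by
-- `abs_sum_add_geom_dyadicIncr_pow_le_of_full`, and a partial right half of one level less.
theorem abs_sum_add_geom_dyadicIncr_pow_le {p : ℕ} (hp : Odd p) {ρ E : ℝ} (hρ : 1 < ρ)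
    (hE₁ : (ρ - 1)⁻¹ ^ p ≤ E) (hE₂ : (p * (ρ - 1)⁻¹ ^ p + E) * ρ ≤ 2 * E) (d : ℕ) :
    ∀ {c : ℝ} {w : ℕ → ℝ}, 0 < c → (∀ m, w m = c * ρ ^ m) →
      ∀ {θ : ℕ → ℕ → ℝ}, IsSign θ → ∀ {α : ℝ}, |α| ≤ c * (ρ - 1)⁻¹ → ∀ {K : ℕ}, K ≤ 2 ^ d →
        |∑ k ∈ range K, (α + dyadicIncr w θ d k) ^ p| ≤ E * c ^ p * (2 * ρ ^ (p - 1)) ^ d := by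
  set K₁ := (ρ - 1)⁻¹
  have hK₁ρ : K₁ * ρ = K₁ + 1 := by
    have : K₁ * (ρ - 1) = 1 := inv_mul_cancel₀ (sub_pos.mpr hρ).ne'
    linarith
  have hE : 0 ≤ E := (pow_nonneg (inv_pos.mpr (sub_pos.mpr hρ)).le p).trans hE₁
  induction d with
  | zero =>
    intro c w hc _ θ _ α hα K hK
    interval_cases K
    · simpa using mul_nonneg hE (pow_nonneg hc.le p)
    · simp only [Finset.sum_range_one, dyadicIncr_zero, add_zero, abs_pow, pow_zero, mul_one]
      calc |α| ^ p ≤ (c * K₁) ^ p := pow_le_pow_left₀ (abs_nonneg α) hα p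
        _ ≤ E * c ^ p := by rw [mul_pow, mul_comm E]; gcongr
  | succ d ih =>
    intro c w hc hw θ hθ α hα K hK
    have hcρ : 0 < c * ρ := mul_pos hc (zero_lt_one.trans hρ)
    have hw' : ∀ m, w (m + 1) = c * ρ * ρ ^ m := fun m => by rw [hw, pow_succ]; ring
    have hshift : ∀ s : ℝ, s = 1 ∨ s = -1 → |α + w 0 * s| ≤ c * ρ * K₁ := fun s hs =>
      calc |α + w 0 * s| ≤ |α| + |w 0 * s| := abs_add_le _ _
        _ = |α| + c := by rcases hs with rfl | rfl <;> simp [hw, abs_of_pos hc]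
        _ ≤ c * K₁ + c := by linarith
        _ = c * ρ * K₁ := by linear_combination (-c) * hK₁ρ
    have hθL : IsSign fun m j => θ (m + 1) j := fun m j => hθ (m + 1) j
    have hθR : IsSign fun m j => θ (m + 1) (2 ^ m + j) := fun m j => hθ (m + 1) (2 ^ m + j)
    have hstep := mul_mul_pow_le_of_mul_le hp.pos (zero_lt_one.trans hρ).le hc.le hE₂ d
    refine le_trans ?_ hstep
    rcases le_or_gt K (2 ^ d) with hKd | hKd
    · have hsum := sum_comp_dyadicIncr_succ w θ (fun y => (α + y) ^ p) hKd
      simp only [← add_assoc] at hsum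
      rw [hsum]
      refine (ih hcρ hw' hθL (hshift _ (hθ 0 0)) hKd).trans ?_
      gcongr
      exact le_add_of_nonneg_left (by positivity)
    · obtain ⟨K', rfl⟩ : ∃ K', K = 2 ^ d + K' := ⟨K - 2 ^ d, by omega⟩
      have hK' : K' ≤ 2 ^ d := by rw [pow_succ] at hK; omega
      have hL := sum_comp_dyadicIncr_succ w θ (fun y => (α + y) ^ p) (le_refl (2 ^ d))
      have hR := sum_comp_dyadicIncr_succ_two_pow_add w θ (fun y => (α + y) ^ p) hK'
      simp only [← add_assoc, ← mul_neg] at hL hR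
      rw [Finset.sum_range_add, hL, hR]
      calc _ ≤ _ := abs_add_le _ _
        _ ≤ p * K₁ ^ p * (c * ρ) ^ p * (2 * ρ ^ (p - 1)) ^ d
            + E * (c * ρ) ^ p * (2 * ρ ^ (p - 1)) ^ d :=
          add_le_add (abs_sum_add_geom_dyadicIncr_pow_le_of_full hp hρ hcρ hw' hθL d
              (hshift _ (hθ 0 0)))
            (ih hcρ hw' hθR (hshift _ (IsSign.neg hθ 0 0)) hK')
        _ = _ := by ring

lemma tsum_tlTerm_dyadic_sub (H : ℝ) (θ : ℕ → ℕ → ℝ) {n k : ℕ} (hk : k < 2 ^ n) :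
    ∑' m, tlTerm H θ m ((k + 1) / 2 ^ n) - ∑' m, tlTerm H θ m (k / 2 ^ n)
      = dyadicIncr (fun m => (2 ^ n)⁻¹ * (2 ^ (1 - H)) ^ m) θ n k := by
  have hvanish : ∀ j : ℕ, ∀ m ∉ range n, tlTerm H θ m (j / 2 ^ n) = 0 := fun j m hm =>
    tlTerm_dyadic_eq_zero H θ (not_lt.mp (mt Finset.mem_range.mpr hm)) j
  rw [tsum_eq_sum (s := range n) (by exact_mod_cast hvanish (k + 1)), tsum_eq_sum (hvanish k),
    ← Finset.sum_sub_distrib]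
  exact Finset.sum_congr rfl fun m hm => by
    rw [tlTerm_dyadic_sub H θ (Finset.mem_range.mp hm) hk]

theorem abs_sum_dyadicIncr_pow_le {p : ℕ} (hp : Odd p) {ρ : ℝ} (hρ₁ : 1 < ρ) (hρ₂ : ρ < 2) :
    ∃ E, ∀ {θ : ℕ → ℕ → ℝ}, IsSign θ → ∀ n {K : ℕ}, K ≤ 2 ^ n →
      |∑ k ∈ range K, dyadicIncr (fun m => (2 ^ n)⁻¹ * ρ ^ m) θ n k ^ p|
        ≤ E * ((ρ / 2) ^ (p - 1)) ^ n := by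
  set K₁ := (ρ - 1)⁻¹
  have hK₁ : 0 < K₁ ^ p := pow_pos (inv_pos.mpr (sub_pos.mpr hρ₁)) p
  have hp₁ : (1 : ℝ) ≤ p := by exact_mod_cast hp.pos
  set E := 2 * p * K₁ ^ p / (2 - ρ)
  have hE : E * (2 - ρ) = 2 * p * K₁ ^ p := div_mul_cancel₀ _ (by linarith)
  have hE₁ : K₁ ^ p ≤ E := by nlinarith
  have hE₂ : (p * K₁ ^ p + E) * ρ ≤ 2 * E := by
    nlinarith [mul_nonneg (by positivity : (0 : ℝ) ≤ p * K₁ ^ p) (by linarith : (0 : ℝ) ≤ 2 - ρ)]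
  refine ⟨E, fun hθ n K hK => ?_⟩
  have h := abs_sum_add_geom_dyadicIncr_pow_le hp hρ₁ hE₁ hE₂ n (c := (2 ^ n)⁻¹) (by positivity)
    (fun m => rfl) hθ (α := 0) (by simp only [abs_zero]; positivity) hK
  simp only [zero_add] at h
  refine h.trans_eq ?_
  obtain ⟨q, rfl⟩ := Nat.exists_eq_add_one.mpr hp.pos
  simp only [Nat.add_sub_cancel, div_pow, mul_pow, inv_pow]
  field_simp
  ring

lemma exists_filter_range_eq_range {P : ℕ → Prop} [DecidablePred P] (hP : Antitone P) (N : ℕ) :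
    ∃ K ≤ N, (range N).filter P = range K := by
  induction N with
  | zero => exact ⟨0, le_rfl, by simp⟩
  | succ N ih =>
    by_cases hN : P N
    · exact ⟨N + 1, le_rfl, Finset.filter_true_of_mem fun i hi =>
        hP (Nat.lt_succ_iff.mp (Finset.mem_range.mp hi)) hN⟩
    · obtain ⟨K, hK, h⟩ := ih
      exact ⟨K, hK.trans N.le_succ, by rw [Finset.range_add_one, Finset.filter_insert, if_neg hN, h]⟩

end TakagiLandsberg

open TakagiLandsberg in
theorem stmt17_general (H : ℝ) (hH : H ∈ Set.Ioo (0:ℝ) 1) (p : ℕ) (hodd : Odd p)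
    (hp : (p : ℝ) = 1 / H) (x : ℝ → ℝ) (hx : MemX H x) (t : ℝ) :
    Tendsto (fun n => ∑ k ∈ Finset.range (2 ^ n),
        if (k : ℝ) / 2 ^ n ≤ t then (x (((k:ℝ)+1)/2^n) - x ((k:ℝ)/2^n)) ^ p else 0)
      atTop (nhds 0) := by
  obtain ⟨θ, hθ, hxθ⟩ := hx
  obtain rfl : x = fun t => ∑' m, tlTerm H θ m t := funext hxθ
  have hρ₁ : 1 < (2 : ℝ) ^ (1 - H) := Real.one_lt_rpow one_lt_two (by linarith [hH.2])
  have hρ₂ : (2 : ℝ) ^ (1 - H) < 2 := by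
    simpa using Real.rpow_lt_rpow_of_exponent_lt one_lt_two (by linarith [hH.1] : 1 - H < 1)
  have hp₂ : 2 ≤ p := by
    have : (1 : ℝ) < p := by rw [hp, lt_div_iff₀ hH.1]; linarith [hH.2]
    exact_mod_cast this
  have hr : ((2 : ℝ) ^ (1 - H) / 2) ^ (p - 1) < 1 :=
    pow_lt_one₀ (by positivity) ((div_lt_one two_pos).mpr hρ₂) (by omega)
  obtain ⟨E, hE⟩ := abs_sum_dyadicIncr_pow_le hodd hρ₁ hρ₂
  refine squeeze_zero_norm (fun n => ?_)
    (by simpa using (tendsto_pow_atTop_nhds_zero_of_lt_one (by positivity) hr).const_mul E)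
  obtain ⟨K, hK, hfilter⟩ := exists_filter_range_eq_range (P := fun k : ℕ => (k : ℝ) / 2 ^ n ≤ t)
    (fun i j hij h => (div_le_div_of_nonneg_right (by exact_mod_cast hij) (by positivity)).trans h)
    (2 ^ n)
  rw [← Finset.sum_filter, hfilter, Real.norm_eq_abs]
  refine le_of_eq_of_le (congrArg abs (Finset.sum_congr rfl fun k hk => ?_)) (hE hθ n hK)
  rw [tsum_tlTerm_dyadic_sub H θ ((Finset.mem_range.mp hk).trans_le hK)]

theorem stmt17 (H : ℝ) (hH : H ∈ Set.Ioo (0:ℝ) 1) (p : ℕ) (hodd : Odd p)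
    (hp : (p : ℝ) = 1 / H) (x : ℝ → ℝ) (hx : MemX H x) (t : ℝ) (ht : t ∈ Set.Icc (0:ℝ) 1) :
    Tendsto (fun n => ∑ k ∈ Finset.range (2 ^ n),
        if (k : ℝ) / 2 ^ n ≤ t then (x (((k:ℝ)+1)/2^n) - x ((k:ℝ)/2^n)) ^ p else 0)
      atTop (nhds 0) :=
  stmt17_general H hH p hodd hp x hx t
end

section
/- For H ∈ (0,1) and x ∈ 𝔛^H with Faber–Schauder coefficients θ_{m,ℓ}, there exist y ∈ 𝔛^H and a linear function f such that x(t) = f(2t) + 2^{−H} y(2t) for all t ∈ [0, 1/2]. Specifically, f(u) = (θ_{0,0}/2) u and y = Σ_{m=0}^∞ 2^{m(1/2−H)} Σ_{ℓ=0}^{2^m−1} θ_{m+1,ℓ} e_{m,ℓ}. -/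
open Filter Finset Set MeasureTheory ProbabilityTheory

/-
On [0, 1/2] the level-0 hat is the identity, e_{0,0}(t) = t, which gives the linear part.
At level m + 1 the hats e_{m+1,ℓ} with ℓ < 2^m are rescaled copies,
e_{m+1,ℓ}(t) = 2^{-1/2} e_{m,ℓ}(2t), and the others vanish on [0, 1/2]; as
2^{(m+1)(1/2-H)} · 2^{-1/2} = 2^{-H} · 2^{m(1/2-H)}, the tail of the series is 2^{-H} y(2t).
Splitting off the first term is legitimate since the series converges absolutely: at each t
at most one hat of level m is nonzero, so the m-th term is at most 2^{-mH}/2.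
-/

lemma e00_nonneg (t : ℝ) : 0 ≤ e00 t := le_max_right _ _

lemma e00_le_half (t : ℝ) : e00 t ≤ 1 / 2 := by
  rcases le_total t (1 / 2) with h | h
  · exact max_le ((min_le_left _ _).trans h) (by norm_num)
  · exact max_le ((min_le_right _ _).trans (by linarith)) (by norm_num)

lemma e00_of_nonpos_s19 {t : ℝ} (h : t ≤ 0) : e00 t = 0 :=
  max_eq_right ((min_le_left _ _).trans h)

lemma e00_of_one_le_s19 {t : ℝ} (h : 1 ≤ t) : e00 t = 0 :=
  max_eq_right ((min_le_right _ _).trans (by linarith))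

lemma mem_Ioo_of_e00_ne_zero {t : ℝ} (h : e00 t ≠ 0) : t ∈ Set.Ioo 0 1 := by
  by_contra ht
  rw [Set.mem_Ioo, not_and_or, not_lt, not_lt] at ht
  rcases ht with ht | ht
  · exact h (e00_of_nonpos_s19 ht)
  · exact h (e00_of_one_le_s19 ht)

lemma e00_of_mem_Icc {t : ℝ} (ht : t ∈ Set.Icc 0 (1 / 2)) : e00 t = t := by
  rw [e00, min_eq_left (by linarith [ht.2]), max_eq_left ht.1]

lemma abs_fs_le (m : ℕ) (k : ℤ) (t : ℝ) : |fs m k t| ≤ (2 : ℝ) ^ (-(m : ℝ) / 2) * (1 / 2) := by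
  rw [fs, abs_mul, abs_of_nonneg (e00_nonneg _), abs_of_nonneg (by positivity)]
  exact mul_le_mul_of_nonneg_left (e00_le_half _) (by positivity)

lemma eq_of_fs_ne_zero {m : ℕ} {k k' : ℤ} {t : ℝ} (h : fs m k t ≠ 0) (h' : fs m k' t ≠ 0) :
    k = k' := by
  have hk := mem_Ioo_of_e00_ne_zero (right_ne_zero_of_mul h)
  have hk' := mem_Ioo_of_e00_ne_zero (right_ne_zero_of_mul h')
  rw [Set.mem_Ioo] at hk hk'
  have h₁ : (k : ℝ) < k' + 1 := by linarith
  have h₂ : (k' : ℝ) < k + 1 := by linarith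
  norm_cast at h₁ h₂
  omega

lemma fs_of_pow_le {m : ℕ} {k : ℕ} {t : ℝ} (hk : 2 ^ m ≤ k) (ht : t ≤ 1) : fs m k t = 0 := by
  have hk' : (2 : ℝ) ^ m ≤ k := by exact_mod_cast hk
  have : (2 : ℝ) ^ m * t ≤ 2 ^ m := mul_le_of_le_one_right (by positivity) ht
  rw [fs, e00_of_nonpos_s19 (by push_cast; linarith), mul_zero]

lemma fs_succ (m : ℕ) (k : ℤ) (t : ℝ) :
    fs (m + 1) k t = (2 : ℝ) ^ (-(1 : ℝ) / 2) * fs m k (2 * t) := by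
  rw [fs, fs, ← mul_assoc, ← Real.rpow_add two_pos, pow_succ, mul_assoc]
  congr 2
  push_cast
  ring

lemma abs_sum_mul_fs_le (m N : ℕ) (c : ℕ → ℝ) (hc : ∀ k, |c k| ≤ 1) (t : ℝ) :
    |∑ k ∈ range N, c k * fs m k t| ≤ (2 : ℝ) ^ (-(m : ℝ) / 2) * (1 / 2) := by
  by_cases hz : ∀ k ∈ range N, fs m k t = 0
  · rw [sum_eq_zero fun k hk => by rw [hz k hk, mul_zero], abs_zero]
    positivity
  push Not at hz
  obtain ⟨k₀, hk₀, hne⟩ := hz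
  have hothers : ∀ k ∈ range N, k ≠ k₀ → c k * fs m k t = 0 := fun k _ hk => by
    by_cases hfs : fs m k t = 0
    · rw [hfs, mul_zero]
    · exact absurd (Int.ofNat_inj.mp (eq_of_fs_ne_zero hfs hne)) hk
  rw [sum_eq_single_of_mem k₀ hk₀ hothers, abs_mul]
  calc |c k₀| * |fs m k₀ t| ≤ 1 * |fs m k₀ t| := by gcongr; exact hc k₀
    _ ≤ _ := by rw [one_mul]; exact abs_fs_le _ _ _

lemma IsSign.abs_le_one {θ : ℕ → ℕ → ℝ} (hθ : IsSign θ) (m k : ℕ) : |θ m k| ≤ 1 := by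
  rcases hθ m k with h | h <;> simp [h]

lemma abs_tlTerm_le (H : ℝ) (θ : ℕ → ℕ → ℝ) (hθ : ∀ m k, |θ m k| ≤ 1) (m : ℕ) (t : ℝ) :
    |tlTerm H θ m t| ≤ ((2 : ℝ) ^ (-H)) ^ m * (1 / 2) := by
  have hscale : (2 : ℝ) ^ ((m : ℝ) * (1 / 2 - H)) * (2 : ℝ) ^ (-(m : ℝ) / 2)
      = ((2 : ℝ) ^ (-H)) ^ m := by
    rw [← Real.rpow_natCast, ← Real.rpow_mul zero_le_two, ← Real.rpow_add two_pos]
    ring_nf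
  rw [tlTerm, abs_mul, abs_of_nonneg (by positivity), ← hscale, mul_assoc]
  exact mul_le_mul_of_nonneg_left (abs_sum_mul_fs_le m _ (θ m) (hθ m) t) (by positivity)

lemma summable_tlTerm {H : ℝ} (hH : 0 < H) (θ : ℕ → ℕ → ℝ) (hθ : ∀ m k, |θ m k| ≤ 1) (t : ℝ) :
    Summable fun m => tlTerm H θ m t := by
  have hgeom : Summable fun m : ℕ => ((2 : ℝ) ^ (-H)) ^ m * (1 / 2) :=
    (summable_geometric_of_lt_one (by positivity)
      (Real.rpow_lt_one_of_one_lt_of_neg one_lt_two (neg_neg_of_pos hH))).mul_right _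
  exact hgeom.of_norm_bounded fun m => abs_tlTerm_le H θ hθ m t

lemma tlTerm_zero_of_mem_Icc (H : ℝ) (θ : ℕ → ℕ → ℝ) {t : ℝ} (ht : t ∈ Set.Icc 0 (1 / 2)) :
    tlTerm H θ 0 t = θ 0 0 / 2 * (2 * t) := by
  simp only [tlTerm, fs, CharP.cast_eq_zero, zero_mul, neg_zero, zero_div, Real.rpow_zero,
    pow_zero, range_one, sum_singleton, one_mul, Int.cast_zero, sub_zero, e00_of_mem_Icc ht]
  ring

lemma tlTerm_succ_of_mem_Icc (H : ℝ) (θ : ℕ → ℕ → ℝ) (m : ℕ) {t : ℝ}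
    (ht : t ∈ Set.Icc 0 (1 / 2)) :
    tlTerm H θ (m + 1) t = (2 : ℝ) ^ (-H) * tlTerm H (fun m k => θ (m + 1) k) m (2 * t) := by
  have htwo : 2 * t ≤ 1 := by linarith [ht.2]
  have hrange : ∑ k ∈ range (2 ^ (m + 1)), θ (m + 1) k * fs m k (2 * t)
      = ∑ k ∈ range (2 ^ m), θ (m + 1) k * fs m k (2 * t) := by
    refine (sum_subset (range_subset_range.mpr (Nat.pow_le_pow_right two_pos m.le_succ))
      fun k _ hk => ?_).symm
    rw [fs_of_pow_le (not_lt.mp (mem_range.not.mp hk)) htwo, mul_zero]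
  have hexp : (2 : ℝ) ^ (-(1 : ℝ) / 2) * (2 : ℝ) ^ (((m + 1 : ℕ) : ℝ) * (1 / 2 - H))
      = (2 : ℝ) ^ (-H) * (2 : ℝ) ^ ((m : ℝ) * (1 / 2 - H)) := by
    rw [← Real.rpow_add two_pos, ← Real.rpow_add two_pos]
    push_cast
    ring_nf
  simp only [tlTerm, fs_succ, mul_left_comm _ ((2 : ℝ) ^ (-(1 : ℝ) / 2)), ← mul_sum]
  rw [hrange, ← mul_assoc, hexp, mul_assoc]

theorem stmt19 (H : ℝ) (hH : H ∈ Set.Ioo (0:ℝ) 1) (θ : ℕ → ℕ → ℝ) (hθ : IsSign θ) :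
    ∃ y : ℝ → ℝ, MemX H y ∧
      (∀ t : ℝ, y t = ∑' m : ℕ, tlTerm H (fun m k => θ (m+1) k) m t) ∧
      ∀ t ∈ Set.Icc (0:ℝ) (1/2),
        (∑' m : ℕ, tlTerm H θ m t) = (θ 0 0 / 2) * (2 * t) + (2:ℝ) ^ (-H) * y (2 * t) := by
  refine ⟨fun s => ∑' m, tlTerm H (fun m k => θ (m + 1) k) m s,
    ⟨fun m k => θ (m + 1) k, fun m k => hθ (m + 1) k, fun _ => rfl⟩, fun _ => rfl, ?_⟩
  intro t ht
  rw [(summable_tlTerm hH.1 θ hθ.abs_le_one t).tsum_eq_zero_add, tlTerm_zero_of_mem_Icc H θ ht,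
    tsum_congr fun m => tlTerm_succ_of_mem_Icc H θ m ht, tsum_mul_left]
end
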